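/- Let B ∈ R^{n×r}, b ∈ R^n, and let Ũ be the orthonormal polar factor of the augmented matrix [B b] ∈ R^{n×(r+1)}, assumed full column rank. Let S ∈ R^{s×n} be such that SŨ has full column rank. If c minimizes ‖Bc − b‖₂ and ĉ minimizes ‖S(Bx − b)‖₂, then ‖Bĉ − b‖₂ ≤ κ₂(SŨ) · ‖Bc − b‖₂, where κ₂(SŨ) = σ_max(SŨ)/σ_min(SŨ). -/

import Mathlib

/-! The residual `B v - b` equals `[B b] (v, -1) = Ũ (H̃ (v, -1))`, and `Ũ` preserves norms, so
both residuals are norms of vectors `y` in `ℝ^{r+1}`. Sketching multiplies these by `SŨ`, which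
stretches `‖y‖` by a factor between `σ_min(SŨ) > 0` and `σ_max(SŨ)`; combined with the
optimality of `ĉ` for the sketched problem this gives
`σ_min ‖y(ĉ)‖ ≤ ‖SŨ y(ĉ)‖ ≤ ‖SŨ y(c)‖ ≤ σ_max ‖y(c)‖`. -/

open Matrix
open scoped Matrix.Norms.L2Operator

/-- Euclidean norm of a vector in `Fin n → ℝ`. -/
noncomputable def enorm2 {n : ℕ} (v : Fin n → ℝ) : ℝ :=
  ‖(WithLp.equiv 2 (Fin n → ℝ)).symm v‖

/-- Smallest singular value: infimum of `‖M x‖₂` over unit vectors `x`. -/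
noncomputable def sigmaMin {m r : ℕ} (M : Matrix (Fin m) (Fin r) ℝ) : ℝ :=
  sInf {t | ∃ x : Fin r → ℝ, enorm2 x = 1 ∧ t = enorm2 (M.mulVec x)}

/-- Largest singular value: supremum of `‖M x‖₂` over unit vectors `x`. -/
noncomputable def sigmaMax {m r : ℕ} (M : Matrix (Fin m) (Fin r) ℝ) : ℝ :=
  sSup {t | ∃ x : Fin r → ℝ, enorm2 x = 1 ∧ t = enorm2 (M.mulVec x)}

/-- Moore–Penrose pseudoinverse of a full-column-rank matrix. -/
noncomputable def pinv {m r : ℕ} (M : Matrix (Fin m) (Fin r) ℝ) :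
    Matrix (Fin r) (Fin m) ℝ :=
  (Mᵀ * M)⁻¹ * Mᵀ

/-- `S` is a row-subsampling matrix: a row-submatrix of the identity. -/
def IsSubsampling {s n : ℕ} (S : Matrix (Fin s) (Fin n) ℝ) : Prop :=
  ∃ f : Fin s → Fin n, Function.Injective f ∧ ∀ i j, S i j = if j = f i then 1 else 0

section Enorm2

variable {n : ℕ}

lemma enorm2_nonneg (v : Fin n → ℝ) : 0 ≤ enorm2 v := norm_nonneg _

lemma enorm2_eq_zero {v : Fin n → ℝ} : enorm2 v = 0 ↔ v = 0 := by
  simp [enorm2]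

lemma enorm2_pos {v : Fin n → ℝ} (hv : v ≠ 0) : 0 < enorm2 v :=
  (enorm2_nonneg v).lt_of_ne' (mt enorm2_eq_zero.mp hv)

lemma enorm2_smul (a : ℝ) (v : Fin n → ℝ) : enorm2 (a • v) = |a| * enorm2 v := by
  simp [enorm2, norm_smul]

lemma enorm2_sq (v : Fin n → ℝ) : enorm2 v ^ 2 = v ⬝ᵥ v := by
  rw [enorm2, EuclideanSpace.norm_eq, Real.sq_sqrt (by positivity)]
  simp [dotProduct, sq]

lemma enorm2_mulVec_of_transpose_mul_self {k : ℕ} {U : Matrix (Fin n) (Fin k) ℝ}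
    (hU : Uᵀ * U = 1) (y : Fin k → ℝ) : enorm2 (U *ᵥ y) = enorm2 y := by
  refine (pow_left_inj₀ (enorm2_nonneg _) (enorm2_nonneg _) two_ne_zero).mp ?_
  rw [enorm2_sq, enorm2_sq, dotProduct_mulVec, ← mulVec_transpose, mulVec_mulVec, hU,
    one_mulVec]

end Enorm2

section SingularValues

variable {m k : ℕ}

lemma exists_unit_enorm2_mulVec_eq (M : Matrix (Fin m) (Fin k) ℝ) {x : Fin k → ℝ}
    (hx : x ≠ 0) : ∃ u, enorm2 u = 1 ∧ enorm2 (M *ᵥ x) = enorm2 (M *ᵥ u) * enorm2 x := by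
  have hpos := enorm2_pos hx
  refine ⟨(enorm2 x)⁻¹ • x, ?_, ?_⟩
  · rw [enorm2_smul, abs_inv, abs_of_pos hpos, inv_mul_cancel₀ hpos.ne']
  · rw [mulVec_smul, enorm2_smul, abs_inv, abs_of_pos hpos]
    field_simp

lemma enorm2_mulVec_le_sigmaMax_mul (M : Matrix (Fin m) (Fin k) ℝ) (x : Fin k → ℝ) :
    enorm2 (M *ᵥ x) ≤ sigmaMax M * enorm2 x := by
  rcases eq_or_ne x 0 with rfl | hx
  · simp [enorm2_eq_zero.mpr]
  obtain ⟨u, hu, hMx⟩ := exists_unit_enorm2_mulVec_eq M hx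
  have hbdd : BddAbove {t | ∃ x : Fin k → ℝ, enorm2 x = 1 ∧ t = enorm2 (M *ᵥ x)} := by
    refine ⟨‖M‖, ?_⟩
    rintro t ⟨x, hx, rfl⟩
    have hop : enorm2 (M *ᵥ x) ≤ ‖M‖ * enorm2 x := by
      simpa [enorm2] using M.l2_opNorm_mulVec ((WithLp.equiv 2 (Fin k → ℝ)).symm x)
    rwa [hx, mul_one] at hop
  rw [hMx]
  exact mul_le_mul_of_nonneg_right (le_csSup hbdd ⟨u, hu, rfl⟩) (enorm2_nonneg x)

lemma sigmaMin_mul_le_enorm2_mulVec (M : Matrix (Fin m) (Fin k) ℝ) (x : Fin k → ℝ) :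
    sigmaMin M * enorm2 x ≤ enorm2 (M *ᵥ x) := by
  rcases eq_or_ne x 0 with rfl | hx
  · simp [enorm2_eq_zero.mpr]
  obtain ⟨u, hu, hMx⟩ := exists_unit_enorm2_mulVec_eq M hx
  have hbdd : BddBelow {t | ∃ x : Fin k → ℝ, enorm2 x = 1 ∧ t = enorm2 (M *ᵥ x)} := by
    refine ⟨0, ?_⟩
    rintro t ⟨x, -, rfl⟩
    exact enorm2_nonneg _
  rw [hMx]
  exact mul_le_mul_of_nonneg_right (csInf_le hbdd ⟨u, hu, rfl⟩) (enorm2_nonneg x)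

lemma mulVec_injective_of_rank_eq {M : Matrix (Fin m) (Fin k) ℝ} (h : M.rank = k) :
    Function.Injective M.mulVec := by
  have hsum := M.mulVecLin.finrank_range_add_finrank_ker
  rw [← Matrix.rank, h, Module.finrank_fin_fun, add_eq_left,
    Submodule.finrank_eq_zero, LinearMap.ker_eq_bot] at hsum
  exact hsum

/-- Full column rank makes `M` injective, hence antilipschitz since its domain is finite-dimensional. -/
lemma sigmaMin_pos {M : Matrix (Fin m) (Fin k) ℝ} (hk : 0 < k) (h : M.rank = k) :
    0 < sigmaMin M := by
  have hker : LinearMap.ker (toLpLin 2 2 M) = ⊥ := by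
    rw [LinearMap.ker_eq_bot]
    intro x y hxy
    rw [toLpLin_apply, toLpLin_apply] at hxy
    exact WithLp.ofLp_injective 2 (mulVec_injective_of_rank_eq h (WithLp.toLp_injective 2 hxy))
  obtain ⟨K, hKpos, hK⟩ := (toLpLin 2 2 M).exists_antilipschitzWith hker
  have hKpos' : (0 : ℝ) < K := hKpos
  refine (inv_pos.mpr hKpos').trans_le (le_csInf ⟨_, Pi.single ⟨0, hk⟩ 1, ?_, rfl⟩ ?_)
  · simp [enorm2]
  rintro t ⟨x, hx, rfl⟩
  have hlow : enorm2 x ≤ K * enorm2 (M *ᵥ x) := by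
    simpa [enorm2] using hK.le_mul_dist ((WithLp.equiv 2 (Fin k → ℝ)).symm x) 0
  rw [inv_le_iff_one_le_mul₀' hKpos', ← hx]
  exact hlow

end SingularValues

lemma of_augment_mulVec_snoc_neg_one {R : Type*} [CommRing R] {n r : ℕ}
    (B : Matrix (Fin n) (Fin r) R) (b : Fin n → R) (v : Fin r → R) :
    (Matrix.of fun i (j : Fin (r + 1)) => if h : (j : ℕ) < r then B i ⟨j, h⟩ else b i) *ᵥ
      Fin.snoc v (-1) = B *ᵥ v - b := by
  funext i
  simp [mulVec, dotProduct, Fin.sum_univ_castSucc, sub_eq_add_neg]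

theorem stmt2_general {n r s : ℕ}
    (B : Matrix (Fin n) (Fin r) ℝ) (b : Fin n → ℝ)
    (Bb : Matrix (Fin n) (Fin (r + 1)) ℝ)
    (hBb : Bb = Matrix.of fun i (j : Fin (r + 1)) =>
      if h : (j : ℕ) < r then B i ⟨j, h⟩ else b i)
    (Ut : Matrix (Fin n) (Fin (r + 1)) ℝ) (Ht : Matrix (Fin (r + 1)) (Fin (r + 1)) ℝ)
    (hpolar : Bb = Ut * Ht) (hUt : Utᵀ * Ut = 1)
    (S : Matrix (Fin s) (Fin n) ℝ) (hSU : (S * Ut).rank = r + 1)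
    (c chat : Fin r → ℝ)
    (hchat : ∀ v : Fin r → ℝ,
      enorm2 (S.mulVec (B.mulVec chat - b)) ≤ enorm2 (S.mulVec (B.mulVec v - b))) :
    enorm2 (B.mulVec chat - b) ≤
      (sigmaMax (S * Ut) / sigmaMin (S * Ut)) * enorm2 (B.mulVec c - b) := by
  set y : (Fin r → ℝ) → Fin (r + 1) → ℝ := fun v => Ht *ᵥ Fin.snoc v (-1)
  have hres : ∀ v, B *ᵥ v - b = Ut *ᵥ y v := fun v => by
    rw [mulVec_mulVec, ← hpolar, hBb, of_augment_mulVec_snoc_neg_one]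
  have hsketch : ∀ v, S *ᵥ (B *ᵥ v - b) = (S * Ut) *ᵥ y v := fun v => by
    rw [hres, mulVec_mulVec]
  rw [hres, hres, enorm2_mulVec_of_transpose_mul_self hUt,
    enorm2_mulVec_of_transpose_mul_self hUt, div_mul_eq_mul_div,
    le_div_iff₀ (sigmaMin_pos r.succ_pos hSU), mul_comm]
  calc sigmaMin (S * Ut) * enorm2 (y chat) ≤ enorm2 ((S * Ut) *ᵥ y chat) :=
        sigmaMin_mul_le_enorm2_mulVec _ _
    _ = enorm2 (S *ᵥ (B *ᵥ chat - b)) := by rw [hsketch]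
    _ ≤ enorm2 (S *ᵥ (B *ᵥ c - b)) := hchat c
    _ = enorm2 ((S * Ut) *ᵥ y c) := by rw [hsketch]
    _ ≤ sigmaMax (S * Ut) * enorm2 (y c) := enorm2_mulVec_le_sigmaMax_mul _ _

/-- residual bound via the condition number of the sketched
augmented orthonormal factor. -/
theorem stmt2 {n r s : ℕ} (hnr : r < n) (hrs : r + 1 ≤ s) (hsn : s ≤ n)
    (B : Matrix (Fin n) (Fin r) ℝ) (b : Fin n → ℝ)
    (Bb : Matrix (Fin n) (Fin (r + 1)) ℝ)
    (hBb : Bb = Matrix.of fun i (j : Fin (r + 1)) =>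
      if h : (j : ℕ) < r then B i ⟨j, h⟩ else b i)
    (Ut : Matrix (Fin n) (Fin (r + 1)) ℝ) (Ht : Matrix (Fin (r + 1)) (Fin (r + 1)) ℝ)
    (hpolar : Bb = Ut * Ht) (hUt : Utᵀ * Ut = 1) (hHt : Ht.PosDef)
    (hBbrank : Bb.rank = r + 1)
    (S : Matrix (Fin s) (Fin n) ℝ) (hSU : (S * Ut).rank = r + 1)
    (c chat : Fin r → ℝ)
    (hc : ∀ v : Fin r → ℝ, enorm2 (B.mulVec c - b) ≤ enorm2 (B.mulVec v - b))
    (hchat : ∀ v : Fin r → ℝ,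
      enorm2 (S.mulVec (B.mulVec chat - b)) ≤ enorm2 (S.mulVec (B.mulVec v - b))) :
    enorm2 (B.mulVec chat - b) ≤
      (sigmaMax (S * Ut) / sigmaMin (S * Ut)) * enorm2 (B.mulVec c - b) :=
  stmt2_general B b Bb hBb Ut Ht hpolar hUt S hSU c chat hchat
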